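/- arXiv:2308.16749 — 4 statements merged into one kernel-verified Lean document; each statement's English description precedes it below -/
import Mathlib

section
/- For every integer k ≥ 0, the polynomial identity R_k = Σ_{i=0}^{k} t_{k,i} · e_i holds in F[z], where t_{k,i} = {2k+1}! {2i+2} / ({k+i+2}! {k−i}!). -/
open Finset

noncomputable section

/-- The field `F = ℚ(𝔮)` of rational functions over `ℚ` in an indeterminate `𝔮`. -/
abbrev F : Type := RatFunc ℚ

/-- The indeterminate `𝔮`. -/
noncomputable def qv : F := RatFunc.X

/-- `{n} = 𝔮^n - 𝔮^{-n}` for `n : ℤ`. -/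
def brc (n : ℤ) : F := qv ^ n - qv ^ (-n)

/-- `[n] = {n}/{1}`. -/
def brk (n : ℤ) : F := brc n / brc 1

/-- `{n}! = ∏_{j=1}^n {j}`. -/
def brcFac (n : ℕ) : F := ∏ j ∈ Finset.range n, brc ((j : ℤ) + 1)

/-- `[n]! = ∏_{j=1}^n [j]`. -/
def brkFac (n : ℕ) : F := ∏ j ∈ Finset.range n, brk ((j : ℤ) + 1)

/-- `q = 𝔮²`. -/
def qq : F := qv ^ 2

/-- The q-Pochhammer symbol `(x; q)_k = ∏_{j=0}^{k-1} (1 - x q^j)`. -/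
def poch (x : F) (k : ℕ) : F := ∏ j ∈ Finset.range k, (1 - x * qq ^ j)

/-- The q-binomial coefficient `[n choose i]_q`. -/
def qbinom (n i : ℕ) : F := poch qq n / (poch qq i * poch qq (n - i))

/-- The Chebyshev-like basis `e_i` of `F[z]`: `e_0 = 1`, `e_1 = z`, `e_i = z e_{i-1} - e_{i-2}`. -/
noncomputable def e : ℕ → Polynomial F
  | 0 => 1
  | 1 => Polynomial.X
  | (i + 2) => Polynomial.X * e (i + 1) - e i

/-- `λ_i = -𝔮^{i+1} - 𝔮^{-i-1}`. -/
def lam (i : ℤ) : F := -qv ^ (i + 1) - qv ^ (-(i + 1))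

/-- `R_n = ∏_{i=0}^{n-1} (z - λ_{2i})`. -/
noncomputable def R (n : ℕ) : Polynomial F :=
  ∏ i ∈ Finset.range n, (Polynomial.X - Polynomial.C (lam (2 * (i : ℤ))))

/-- `t_{k,i} = {2k+1}! {2i+2} / ({k+i+2}! {k-i}!)` for `0 ≤ i ≤ k`. -/
def tcoef (k i : ℕ) : F :=
  brcFac (2 * k + 1) * brc (2 * (i : ℤ) + 2) / (brcFac (k + i + 2) * brcFac (k - i))


/-!
Induction on `k` via `R_{k+1} = R_k (z - λ_{2k})`. The polynomial `e_i` is Mathlib's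
`Chebyshev.S i`, so `z e_i = e_{i+1} + e_{i-1}` holds for all `i : ℤ`, with `e_{-1} = 0`.
Extending `t_k` by zero to `ℤ` and summing over all of `ℤ`, multiplication by `z - λ_{2k}`
turns the coefficients `t_{k,i}` into `t_{k,i-1} + t_{k,i+1} - λ_{2k} t_{k,i}` without boundary
terms. This equals `t_{k+1,i}` for `i ≠ -1`, which after clearing the `{n}!` is a three-term
identity between Laurent polynomials in `𝔮`.
-/

open Polynomial Function

lemma qv_ne_zero : qv ≠ 0 := RatFunc.X_ne_zero

lemma qv_pow_ne_one {m : ℕ} (hm : m ≠ 0) : qv ^ m ≠ 1 := by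
  intro h
  have h1 : (X : ℚ[X]) ^ m = 1 := by
    apply RatFunc.algebraMap_injective ℚ
    simpa [qv, RatFunc.algebraMap_X, map_pow] using h
  simpa [hm] using congrArg natDegree h1

lemma brc_ne_zero {n : ℤ} (hn : 0 < n) : brc n ≠ 0 := by
  lift n to ℕ using hn.le
  intro h
  rw [brc, sub_eq_zero] at h
  apply qv_pow_ne_one (m := n + n) (by omega)
  rw [pow_add, ← zpow_natCast]
  nth_rewrite 1 [h]
  rw [← zpow_add₀ qv_ne_zero, neg_add_cancel, zpow_zero]

lemma brcFac_succ (n : ℕ) : brcFac (n + 1) = brcFac n * brc ((n : ℤ) + 1) :=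
  prod_range_succ _ _

lemma brcFac_zero : brcFac 0 = 1 :=
  prod_range_zero _

lemma brcFac_ne_zero (n : ℕ) : brcFac n ≠ 0 :=
  prod_ne_zero_iff.2 fun _ _ => brc_ne_zero (by positivity)

/- The recurrence for `t_{k,i}` with `i = N`, `k = N + D`, after clearing factorials. -/
lemma brc_identity (N D : ℤ) :
    brc (2 * N + 2 * D + 2) * brc (2 * N + 2 * D + 3) * brc (2 * N + 2) =
      brc (2 * N) * brc (2 * N + D + 2) * brc (2 * N + D + 3) +
        brc (2 * N + 4) * brc D * brc (D + 1) -
          lam (2 * N + 2 * D) * (brc (2 * N + 2) * brc (2 * N + D + 3) * brc (D + 1)) := by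
  have hq := qv_ne_zero
  simp only [brc, lam, zpow_neg, two_mul, zpow_add₀ hq, add_assoc, zpow_ofNat]
  field_simp
  ring

lemma tcoef_self (k : ℕ) : tcoef k k = 1 := by
  rw [tcoef, Nat.sub_self, show k + k + 2 = 2 * k + 1 + 1 by ring, brcFac_succ (2 * k + 1),
    brcFac_zero, mul_one,
    div_eq_one_iff_eq (mul_ne_zero (brcFac_ne_zero _) (brc_ne_zero (by positivity)))]
  push_cast
  ring_nf

lemma tcoef_add_mul_brcFac (n d : ℕ) :
    tcoef (n + d) n * (brcFac (2 * n + d + 2) * brcFac d) =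
      brcFac (2 * n + 2 * d + 1) * brc (2 * n + 2) := by
  rw [tcoef, show n + d + n + 2 = 2 * n + d + 2 by ring, Nat.add_sub_cancel_left,
    show 2 * (n + d) + 1 = 2 * n + 2 * d + 1 by ring,
    div_mul_cancel₀ _ (mul_ne_zero (brcFac_ne_zero _) (brcFac_ne_zero _))]

/-- `tcoef k i` is not zero for `i > k` (`k - i` truncates), hence the explicit cut-off. -/
def tcoefExt (k : ℕ) (i : ℤ) : F :=
  if 0 ≤ i ∧ i ≤ k then tcoef k i.toNat else 0

lemma tcoefExt_natCast {k n : ℕ} (h : n ≤ k) : tcoefExt k n = tcoef k n := by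
  rw [tcoefExt, if_pos ⟨n.cast_nonneg, by exact_mod_cast h⟩, Int.toNat_natCast]

lemma hasFiniteSupport_tcoefExt (k : ℕ) : HasFiniteSupport (tcoefExt k) := by
  refine (Set.finite_Icc (0 : ℤ) k).subset fun i hi => ?_
  by_contra h
  exact hi (if_neg h)

section Recurrence

variable (n d : ℕ)

/- In the next four lemmas `k = n + d`, `i = n`, and every coefficient of the recurrence is
multiplied by the common denominator `{k+i+3}! {k-i+1}!`. -/
lemma tcoef_add_mul_denom :
    tcoef (n + d) n * (brcFac (2 * n + d + 3) * brcFac (d + 1)) =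
      brcFac (2 * n + 2 * d + 1) * (brc (2 * n + 2) * brc (2 * n + d + 3) * brc (d + 1)) := by
  rw [brcFac_succ (2 * n + d + 2), brcFac_succ d]
  push_cast
  linear_combination (norm := ring_nf) (brc (2 * n + d + 3) * brc (d + 1)) *
    tcoef_add_mul_brcFac n d

lemma tcoef_add_succ_mul_denom :
    tcoef (n + d + 1) n * (brcFac (2 * n + d + 3) * brcFac (d + 1)) =
      brcFac (2 * n + 2 * d + 1) *
        (brc (2 * n + 2 * d + 2) * brc (2 * n + 2 * d + 3) * brc (2 * n + 2)) := by
  have h := tcoef_add_mul_brcFac n (d + 1)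
  rw [show 2 * n + 2 * (d + 1) + 1 = 2 * n + 2 * d + 1 + 1 + 1 by ring,
    brcFac_succ (2 * n + 2 * d + 2), brcFac_succ (2 * n + 2 * d + 1)] at h
  push_cast at h
  linear_combination (norm := ring_nf) h

lemma tcoefExt_sub_one_mul_denom :
    tcoefExt (n + d) (n - 1) * (brcFac (2 * n + d + 3) * brcFac (d + 1)) =
      brcFac (2 * n + 2 * d + 1) * (brc (2 * n) * brc (2 * n + d + 2) * brc (2 * n + d + 3)) := by
  cases n with
  | zero => simp [tcoefExt, brc]
  | succ m =>
    rw [show ((m + 1 : ℕ) : ℤ) - 1 = m by push_cast; ring, tcoefExt_natCast (by omega),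
      brcFac_succ (2 * (m + 1) + d + 2), brcFac_succ (2 * (m + 1) + d + 1)]
    push_cast
    linear_combination (norm := ring_nf) (brc (2 * m + d + 4) * brc (2 * m + d + 5)) *
      tcoef_add_mul_brcFac m (d + 1)

lemma tcoefExt_add_one_mul_denom :
    tcoefExt (n + d) (n + 1) * (brcFac (2 * n + d + 3) * brcFac (d + 1)) =
      brcFac (2 * n + 2 * d + 1) * (brc (2 * n + 4) * brc d * brc (d + 1)) := by
  cases d with
  | zero => simp [tcoefExt, brc]
  | succ e =>
    rw [show (n : ℤ) + 1 = ((n + 1 : ℕ) : ℤ) by push_cast; ring, tcoefExt_natCast (by omega),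
      brcFac_succ (e + 1), brcFac_succ e]
    have h := tcoef_add_mul_brcFac (n + 1) e
    push_cast at h ⊢
    linear_combination (norm := ring_nf) (brc (e + 1) * brc (e + 2)) * h

lemma tcoefExt_succ_of_le :
    tcoefExt (n + d + 1) n = tcoefExt (n + d) (n - 1) + tcoefExt (n + d) (n + 1) -
      lam (2 * ((n + d : ℕ) : ℤ)) * tcoefExt (n + d) n := by
  apply mul_right_cancel₀ (mul_ne_zero (brcFac_ne_zero (2 * n + d + 3)) (brcFac_ne_zero (d + 1)))
  rw [tcoefExt_natCast (by omega), tcoefExt_natCast (by omega)]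
  push_cast
  linear_combination (norm := ring_nf)
    tcoef_add_succ_mul_denom n d - tcoefExt_sub_one_mul_denom n d -
    tcoefExt_add_one_mul_denom n d + lam (2 * n + 2 * d) * tcoef_add_mul_denom n d +
    brcFac (2 * n + 2 * d + 1) * brc_identity n d

end Recurrence

lemma tcoefExt_succ (k : ℕ) {i : ℤ} (hi : i ≠ -1) :
    tcoefExt (k + 1) i = tcoefExt k (i - 1) + tcoefExt k (i + 1) - lam (2 * k) * tcoefExt k i := by
  by_cases hik : 0 ≤ i ∧ i ≤ k
  · lift i to ℕ using hik.1
    obtain ⟨d, rfl⟩ := Nat.exists_eq_add_of_le (show i ≤ k by exact_mod_cast hik.2)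
    exact tcoefExt_succ_of_le i d
  by_cases hk : i = k + 1
  · subst hk
    have h1 : tcoefExt (k + 1) (k + 1) = 1 := by
      exact_mod_cast (tcoefExt_natCast le_rfl).trans (tcoef_self (k + 1))
    rw [h1, add_sub_cancel_right, tcoefExt_natCast le_rfl, tcoef_self]
    simp [tcoefExt]
  · simp only [tcoefExt]
    split_ifs <;> first | omega | ring

theorem e_eq_chebyshev_S : ∀ n : ℕ, e n = Chebyshev.S F n
  | 0 => by simp [e]
  | 1 => by simp [e]
  | n + 2 => by
    rw [e, e_eq_chebyshev_S (n + 1), e_eq_chebyshev_S n,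
      show ((n + 2 : ℕ) : ℤ) = n + 2 by push_cast; ring, Chebyshev.S_add_two]
    push_cast
    ring_nf

theorem finsum_C_mul_S_mul_X_sub_C {R : Type*} [CommRing R] [NoZeroDivisors R] (a : ℤ → R)
    (ha : HasFiniteSupport a) (c : R) :
    (∑ᶠ i, C (a i) * Chebyshev.S R i) * (X - C c) =
      ∑ᶠ i, C (a (i - 1) + a (i + 1) - c * a i) * Chebyshev.S R i := by
  have hshift (m : ℤ) : ∑ᶠ i, C (a i) * Chebyshev.S R (i + m) =
      ∑ᶠ i, C (a (i - m)) * Chebyshev.S R i := by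
    rw [← finsum_comp_equiv (Equiv.addRight m) (f := fun i => C (a (i - m)) * Chebyshev.S R i)]
    simp
  calc (∑ᶠ i, C (a i) * Chebyshev.S R i) * (X - C c)
      = ∑ᶠ i, (C (a i) * Chebyshev.S R (i + 1) + C (a i) * Chebyshev.S R (i + -1) -
          C (c * a i) * Chebyshev.S R i) := by
        rw [finsum_mul]
        refine finsum_congr fun i => ?_
        rw [← sub_eq_add_neg, map_mul]
        linear_combination (-C (a i)) * Chebyshev.S_add_one R i
    _ = _ := by
        rw [finsum_sub_distrib, finsum_add_distrib, hshift, hshift,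
          ← finsum_add_distrib, ← finsum_sub_distrib]
        · simp [add_mul, sub_eq_add_neg]
        all_goals fun_prop (disch := first | exact sub_left_injective | simp)

lemma sum_range_eq_finsum_tcoefExt (k : ℕ) :
    ∑ i ∈ range (k + 1), C (tcoef k i) * e i =
      ∑ᶠ i : ℤ, C (tcoefExt k i) * Chebyshev.S F i := by
  rw [finsum_eq_sum_of_support_subset (s := (range (k + 1)).map Nat.castEmbedding), sum_map]
  · refine sum_congr rfl fun i hi => ?_
    rw [Nat.castEmbedding_apply, tcoefExt_natCast (by simpa [Nat.lt_succ_iff] using hi),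
      e_eq_chebyshev_S]
  · intro i hi
    have hik : 0 ≤ i ∧ i ≤ k := by
      by_contra h
      simp [tcoefExt, h] at hi
    lift i to ℕ using hik.1
    simpa [Nat.lt_succ_iff] using hik.2

lemma R_eq_finsum_tcoefExt (k : ℕ) :
    R k = ∑ᶠ i : ℤ, C (tcoefExt k i) * Chebyshev.S F i := by
  induction k with
  | zero => simp [R, ← sum_range_eq_finsum_tcoefExt, tcoef_self, e]
  | succ k ih =>
    rw [R, prod_range_succ, ← R, ih,
      finsum_C_mul_S_mul_X_sub_C _ (hasFiniteSupport_tcoefExt k)]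
    refine finsum_congr fun i => ?_
    rcases eq_or_ne i (-1) with rfl | hi
    · simp [Chebyshev.S_neg_one]
    · rw [tcoefExt_succ k hi]

/-- For every `k ≥ 0`, `R_k = Σ_{i=0}^k t_{k,i} e_i` in `F[z]`. -/
theorem stmt0 (k : ℕ) :
    R k = ∑ i ∈ Finset.range (k + 1), Polynomial.C (tcoef k i) * e i := by
  rw [R_eq_finsum_tcoefExt, sum_range_eq_finsum_tcoefExt]
end
end

section
/- Let α : ℕ → F be any sequence and for n ≥ 0 set B_n = (q;q)_n · Σ_{l=0}^{n} α_l / ((q;q)_{n−l} (q;q)_{n+l+1}). Then for every integer p ≥ 1 and every integer k ≥ 0, (q;q)_k · Σ_{l=0}^{k} q^{(l²+l)(p−1)} α_l / ((q;q)_{k−l} (q;q)_{k+l+1}) = Σ_{k = k_p ≥ k_{p−1} ≥ ⋯ ≥ k_1 ≥ 0} (∏_{i=1}^{p−1} q^{k_i² + k_i} [k_{i+1} choose k_i]_q) · B_{k_1}, the sum being over all chains of length p ending at k. -/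
open Finset

noncomputable section

/-- Chains `k = k_p ≥ k_{p-1} ≥ ⋯ ≥ k_1 ≥ 0` of length `p` ending at `k`,
encoded as monotone functions `Fin p → Fin (k+1)` whose last value is `k`
(the function at index `i` gives `k_{i+1}`). -/
def chains (p k : ℕ) : Finset (Fin p → Fin (k + 1)) :=
  Finset.univ.filter fun g =>
    (∀ i j : Fin p, i ≤ j → g i ≤ g j) ∧ ∀ i : Fin p, (i : ℕ) = p - 1 → (g i : ℕ) = k

/-- The value `k_{i+1}` of a chain (0-indexed access, defaulting to `k` out of range). -/
def cv {p k : ℕ} (g : Fin p → Fin (k + 1)) (i : ℕ) : ℕ :=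
  if h : i < p then (g ⟨i, h⟩ : ℕ) else k

/-!
Write `β_γ(n) = (q;q)_n Σ_l γ_l / ((q;q)_{n-l} (q;q)_{n+l+1})`, so that `B = β_α`. The Bailey
lemma `Σ_j q^{j²+j} [k choose j]_q β_γ(j) = β_{q^{l²+l} γ}(k)` follows by exchanging the two sums:
the inner sum over `j` is, after the shift `j = l + m`, the q-Chu–Vandermonde type evaluation
`Σ_m q^{m(m+c)} / ((q;q)_m (q;q)_{N-m} (q;q)_{m+c}) = 1 / ((q;q)_N (q;q)_{N+c})`, which q-Pascal
reduces from `(N + 1, c)` to `(N, c + 1)` and hence to `N = 0`.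

Splitting a chain of length `p + 1` ending at `k` at its entry `k_p = j` writes the chain sum as
`Σ_j q^{j²+j} [k choose j]_q` times the chain sum of length `p` ending at `j`, so induction on `p`
iterates the Bailey lemma, each step contributing one factor `q^{l²+l}`.
-/

lemma qq_pow_ne_one {m : ℕ} (hm : m ≠ 0) : qq ^ m ≠ 1 := by
  intro h
  have h' : (algebraMap (Polynomial ℚ) F) (Polynomial.X ^ (2 * m)) =
      (algebraMap (Polynomial ℚ) F) 1 := by
    simpa [qq, qv, RatFunc.algebraMap_X, pow_mul, map_pow] using h
  have := congrArg Polynomial.natDegree (RatFunc.algebraMap_injective ℚ h')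
  simp only [Polynomial.natDegree_X_pow, Polynomial.natDegree_one] at this
  omega

lemma one_sub_qq_pow_succ_ne_zero (n : ℕ) : 1 - qq ^ (n + 1) ≠ 0 :=
  sub_ne_zero.mpr (qq_pow_ne_one n.succ_ne_zero).symm

lemma poch_qq_ne_zero (n : ℕ) : poch qq n ≠ 0 :=
  prod_ne_zero_iff.mpr fun j _ => by
    rw [← pow_succ']
    exact one_sub_qq_pow_succ_ne_zero j

lemma poch_zero (x : F) : poch x 0 = 1 := prod_range_zero _

lemma poch_succ (x : F) (n : ℕ) : poch x (n + 1) = poch x n * (1 - x * qq ^ n) :=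
  prod_range_succ _ _

lemma poch_qq_succ (n : ℕ) : poch qq (n + 1) = poch qq n * (1 - qq ^ (n + 1)) := by
  rw [poch_succ, pow_succ']

lemma poch_succ' (x : F) (n : ℕ) : poch x (n + 1) = (1 - x) * poch (x * qq) n := by
  simp only [poch, prod_range_succ', pow_succ, pow_zero, mul_one, mul_assoc, mul_comm]

lemma poch_add (x : F) (a n : ℕ) : poch x (a + n) = poch x a * poch (x * qq ^ a) n := by
  simp only [poch, prod_range_add, pow_add, mul_assoc]

/-- The q-binomial coefficient extended by zero beyond `m ≤ n`, as `Nat.choose` is. -/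
def qchoose (n m : ℕ) : F := if m ≤ n then qbinom n m else 0

lemma qchoose_of_le {n m : ℕ} (h : m ≤ n) : qchoose n m = qbinom n m := if_pos h

lemma qchoose_of_lt {n m : ℕ} (h : n < m) : qchoose n m = 0 := if_neg (by omega)

lemma qchoose_zero_right (n : ℕ) : qchoose n 0 = 1 := by
  rw [qchoose_of_le n.zero_le, qbinom, poch_zero, one_mul, Nat.sub_zero,
    div_self (poch_qq_ne_zero n)]

lemma qchoose_self (n : ℕ) : qchoose n n = 1 := by
  rw [qchoose_of_le le_rfl, qbinom, Nat.sub_self, poch_zero, mul_one,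
    div_self (poch_qq_ne_zero n)]

lemma qchoose_succ_succ (n m : ℕ) :
    qchoose (n + 1) (m + 1) = qchoose n m + qq ^ (m + 1) * qchoose n (m + 1) := by
  rcases lt_trichotomy m n with h | rfl | h
  · obtain ⟨t, rfl⟩ : ∃ t, n = m + t + 1 := ⟨n - m - 1, by omega⟩
    simp only [qchoose_of_le (show m ≤ m + t + 1 by omega),
      qchoose_of_le (show m + 1 ≤ m + t + 1 by omega),
      qchoose_of_le (show m + 1 ≤ m + t + 1 + 1 by omega), qbinom,
      show m + t + 1 + 1 - (m + 1) = t + 1 by omega, show m + t + 1 - (m + 1) = t by omega,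
      show m + t + 1 - m = t + 1 by omega, poch_qq_succ (m + t + 1), poch_qq_succ t,
      poch_qq_succ m]
    have := poch_qq_ne_zero m
    have := poch_qq_ne_zero t
    have := one_sub_qq_pow_succ_ne_zero m
    have := one_sub_qq_pow_succ_ne_zero t
    field_simp
    ring
  · rw [qchoose_self, qchoose_self, qchoose_of_lt (by omega), mul_zero, add_zero]
  · rw [qchoose_of_lt (by omega), qchoose_of_lt h, qchoose_of_lt (by omega), mul_zero, add_zero]

lemma sum_qchoose_mul_qpow_mul_poch (N c : ℕ) :
    ∑ m ∈ range (N + 1),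
      qchoose N m * qq ^ (m * (m + c)) * poch (qq ^ (m + c + 1)) (N - m) = 1 := by
  induction N generalizing c with
  | zero => simp [qchoose_zero_right, poch_zero]
  | succ N ih =>
    rw [← ih (c + 1)]
    set g : ℕ → F := fun m => qq ^ m * qchoose N m * qq ^ (m * (m + c)) *
      poch (qq ^ (m + c + 1)) (N + 1 - m)
    set v : ℕ → F := fun m => qchoose N m * qq ^ ((m + 1) * (m + 1 + c)) *
      poch (qq ^ (m + 1 + c + 1)) (N - m)
    have pascal : ∀ m, qchoose (N + 1) (m + 1) * qq ^ ((m + 1) * (m + 1 + c)) *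
        poch (qq ^ (m + 1 + c + 1)) (N + 1 - (m + 1)) = v m + g (m + 1) := by
      intro m
      simp only [g, v, qchoose_succ_succ, Nat.add_sub_add_right]
      ring
    -- `g m + v m` recombines since `(q^{m+c+1}; q)_{N+1-m} = (1 - q^{m+c+1}) (q^{m+c+2}; q)_{N-m}`.
    have recombine : ∀ m ∈ range (N + 1), v m + g m =
        qchoose N m * qq ^ (m * (m + (c + 1))) * poch (qq ^ (m + (c + 1) + 1)) (N - m) := by
      intro m hm
      rw [mem_range] at hm
      have hpoch : poch (qq ^ (m + c + 1)) (N + 1 - m) =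
          (1 - qq ^ (m + c + 1)) * poch (qq ^ (m + c + 1 + 1)) (N - m) := by
        rw [show N + 1 - m = N - m + 1 by omega, poch_succ', ← pow_succ]
      simp only [g, v, hpoch, show m + 1 + c + 1 = m + c + 1 + 1 by omega,
        show m + (c + 1) + 1 = m + c + 1 + 1 by omega]
      generalize poch (qq ^ (m + c + 1 + 1)) (N - m) = P
      simp only [show (m + 1) * (m + 1 + c) = m * (m + c) + m + (m + c + 1) by ring,
        show m * (m + (c + 1)) = m * (m + c) + m by ring, pow_add]
      ring
    calc _ = ∑ m ∈ range (N + 1), (v m + g (m + 1)) + g 0 := by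
          rw [sum_range_succ', sum_congr rfl fun m _ => pascal m]
          simp [g, qchoose_zero_right]
      _ = ∑ m ∈ range (N + 1), v m + ∑ m ∈ range (N + 2), g m := by
          rw [sum_add_distrib, sum_range_succ' g, add_assoc]
      _ = ∑ m ∈ range (N + 1), (v m + g m) := by
          rw [sum_range_succ g, sum_add_distrib]
          simp [g, qchoose_of_lt (Nat.lt_succ_self N)]
      _ = _ := sum_congr rfl recombine

lemma sum_qpow_div_poch (N c : ℕ) :
    ∑ m ∈ range (N + 1), qq ^ (m * (m + c)) / (poch qq m * poch qq (N - m) * poch qq (m + c)) =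
      1 / (poch qq N * poch qq (N + c)) := by
  rw [eq_div_iff (mul_ne_zero (poch_qq_ne_zero N) (poch_qq_ne_zero (N + c))), sum_mul,
    ← sum_qchoose_mul_qpow_mul_poch N c]
  refine sum_congr rfl fun m hm => ?_
  have hmN : m ≤ N := Nat.lt_succ_iff.mp (mem_range.mp hm)
  rw [qchoose_of_le hmN, qbinom, show N + c = m + c + (N - m) by omega, poch_add qq (m + c),
    ← pow_succ']
  have := poch_qq_ne_zero m
  have := poch_qq_ne_zero (N - m)
  have := poch_qq_ne_zero (m + c)
  field_simp

lemma sum_Ico_qpow_mul_qbinom_mul_poch_div {l k : ℕ} (hlk : l ≤ k) :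
    ∑ j ∈ Ico l (k + 1), qq ^ (j ^ 2 + j) * qbinom k j *
        (poch qq j / (poch qq (j - l) * poch qq (j + l + 1))) =
      qq ^ (l ^ 2 + l) * (poch qq k / (poch qq (k - l) * poch qq (k + l + 1))) := by
  rw [sum_Ico_eq_sum_range, show k + 1 - l = k - l + 1 by omega]
  have hterm : ∀ m ∈ range (k - l + 1),
      qq ^ ((l + m) ^ 2 + (l + m)) * qbinom k (l + m) *
          (poch qq (l + m) / (poch qq (l + m - l) * poch qq (l + m + l + 1))) =
        qq ^ (l ^ 2 + l) * poch qq k *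
          (qq ^ (m * (m + (2 * l + 1))) /
            (poch qq m * poch qq (k - l - m) * poch qq (m + (2 * l + 1)))) := by
    intro m hm
    rw [mem_range] at hm
    rw [qbinom, Nat.add_sub_cancel_left, show l + m + l + 1 = m + (2 * l + 1) by omega,
      show k - (l + m) = k - l - m by omega,
      show (l + m) ^ 2 + (l + m) = l ^ 2 + l + m * (m + (2 * l + 1)) by ring, pow_add]
    have := poch_qq_ne_zero (l + m)
    have := poch_qq_ne_zero m
    have := poch_qq_ne_zero (k - l - m)
    have := poch_qq_ne_zero (m + (2 * l + 1))
    field_simp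
  rw [sum_congr rfl hterm, ← mul_sum, sum_qpow_div_poch,
    show k - l + (2 * l + 1) = k + l + 1 by omega]
  ring

/-- `(q;q)_n β_n` for the Bailey pair `(γ, β)` relative to `a = q`. -/
def baileySum (γ : ℕ → F) (n : ℕ) : F :=
  poch qq n * ∑ l ∈ range (n + 1), γ l / (poch qq (n - l) * poch qq (n + l + 1))

theorem sum_qpow_mul_qbinom_mul_baileySum (γ : ℕ → F) (k : ℕ) :
    ∑ j ∈ range (k + 1), qq ^ (j ^ 2 + j) * qbinom k j * baileySum γ j =
      baileySum (fun l => qq ^ (l ^ 2 + l) * γ l) k := by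
  set f : ℕ → ℕ → F := fun l j => γ l * (qq ^ (j ^ 2 + j) * qbinom k j *
    (poch qq j / (poch qq (j - l) * poch qq (j + l + 1))))
  calc _ = ∑ j ∈ Ico 0 (k + 1), ∑ l ∈ Ico 0 (j + 1), f l j := by
        refine sum_congr (range_eq_Ico _) fun j _ => ?_
        rw [baileySum, ← range_eq_Ico, mul_sum, mul_sum]
        refine sum_congr rfl fun l _ => ?_
        simp only [f]
        ring
    _ = ∑ l ∈ Ico 0 (k + 1), ∑ j ∈ Ico l (k + 1), f l j :=
        (sum_Ico_Ico_comm 0 (k + 1) f).symm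
    _ = _ := by
        rw [baileySum, ← range_eq_Ico, mul_sum]
        refine sum_congr rfl fun l hl => ?_
        rw [← mul_sum,
          sum_Ico_qpow_mul_qbinom_mul_poch_div (Nat.lt_succ_iff.mp (mem_range.mp hl))]
        ring

def chainWeight (c : ℕ → ℕ) (n : ℕ) : F :=
  ∏ i ∈ range n, qq ^ (c i ^ 2 + c i) * qbinom (c (i + 1)) (c i)

def chainSum (p k : ℕ) (C : ℕ → F) : F :=
  ∑ g ∈ chains p k, chainWeight (cv g) (p - 1) * C (cv g 0)

lemma chainWeight_succ (c : ℕ → ℕ) (n : ℕ) :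
    chainWeight c (n + 1) = chainWeight c n * (qq ^ (c n ^ 2 + c n) * qbinom (c (n + 1)) (c n)) :=
  prod_range_succ _ _

lemma chainWeight_congr {c c' : ℕ → ℕ} {n : ℕ} (h : ∀ i ≤ n, c i = c' i) :
    chainWeight c n = chainWeight c' n :=
  prod_congr rfl fun i hi => by
    rw [mem_range] at hi
    rw [h i hi.le, h (i + 1) hi]

section Chains

variable {p k j : ℕ}

lemma cv_of_lt (g : Fin p → Fin (k + 1)) {i : ℕ} (h : i < p) : cv g i = g ⟨i, h⟩ :=
  dif_pos h

lemma cv_of_le (g : Fin p → Fin (k + 1)) {i : ℕ} (h : p ≤ i) : cv g i = k :=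
  dif_neg (by omega)

lemma cv_le (g : Fin p → Fin (k + 1)) (i : ℕ) : cv g i ≤ k := by
  unfold cv
  split_ifs with h
  exacts [Fin.is_le _, le_rfl]

lemma chain_ext {g g' : Fin p → Fin (k + 1)} (h : ∀ i < p, cv g i = cv g' i) : g = g' :=
  funext fun i => Fin.ext <| by simpa only [cv_of_lt _ i.isLt] using h i i.isLt

lemma mem_chains_iff_cv {g : Fin p → Fin (k + 1)} (hp : 1 ≤ p) :
    g ∈ chains p k ↔ Monotone (cv g) ∧ cv g (p - 1) = k := by
  simp only [chains, mem_filter, mem_univ, true_and]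
  constructor
  · rintro ⟨hmono, hlast⟩
    refine ⟨fun i i' hii' => ?_, by rw [cv_of_lt g (by omega)]; exact hlast _ rfl⟩
    by_cases hi' : i' < p
    · rw [cv_of_lt g hi', cv_of_lt g (by omega)]
      exact hmono _ _ (Fin.mk_le_mk.mpr hii')
    · rw [cv_of_le g (not_lt.mp hi')]
      exact cv_le g i
  · rintro ⟨hmono, hlast⟩
    refine ⟨fun i i' hii' => ?_, fun i hi => ?_⟩
    · have := hmono (Fin.le_def.mp hii')
      rwa [cv_of_lt g i.isLt, cv_of_lt g i'.isLt] at this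
    · rw [cv_of_lt g (by omega)] at hlast
      rwa [show i = ⟨p - 1, by omega⟩ from Fin.ext hi]

lemma cv_pred_eq {g : Fin p → Fin (k + 1)} (hp : 1 ≤ p) (hg : g ∈ chains p k) :
    cv g (p - 1) = k :=
  ((mem_chains_iff_cv hp).mp hg).2

-- Clamping with `min` makes both maps total; on the chains they are applied to it does nothing.
def chainInit (j : ℕ) (g : Fin (p + 1) → Fin (k + 1)) : Fin p → Fin (j + 1) :=
  fun i => ⟨min (cv g i) j, by omega⟩

def chainSnoc (k : ℕ) (g : Fin p → Fin (j + 1)) : Fin (p + 1) → Fin (k + 1) :=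
  fun i => ⟨if (i : ℕ) < p then min (cv g i) k else k, by split_ifs <;> omega⟩

lemma cv_chainInit (g : Fin (p + 1) → Fin (k + 1)) (i : ℕ) :
    cv (chainInit j g) i = if i < p then min (cv g i) j else j := by
  by_cases hi : i < p
  · rw [cv_of_lt _ hi, if_pos hi]
    rfl
  · rw [cv_of_le _ (not_lt.mp hi), if_neg hi]

lemma cv_chainSnoc (g : Fin p → Fin (j + 1)) (i : ℕ) :
    cv (chainSnoc k g) i = if i < p then min (cv g i) k else k := by
  unfold chainSnoc
  by_cases hi : i < p + 1
  · rw [cv_of_lt _ hi]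
  · rw [cv_of_le _ (not_lt.mp hi), if_neg (by omega)]

variable {g : Fin (p + 1) → Fin (k + 1)} {g' : Fin p → Fin (j + 1)}

lemma cv_chainInit_of_lt (hp : 1 ≤ p) (hg : g ∈ chains (p + 1) k) (hj : cv g (p - 1) = j)
    {i : ℕ} (hi : i < p) : cv (chainInit j g) i = cv g i := by
  rw [cv_chainInit, if_pos hi, min_eq_left]
  rw [← hj]
  exact ((mem_chains_iff_cv (by omega)).mp hg).1 (by omega)

lemma chainInit_mem (hp : 1 ≤ p) (hg : g ∈ chains (p + 1) k) (hj : cv g (p - 1) = j) :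
    chainInit j g ∈ chains p j := by
  have hmono := ((mem_chains_iff_cv (by omega)).mp hg).1
  refine (mem_chains_iff_cv hp).mpr ⟨fun i i' hii' => ?_, ?_⟩
  · simp only [cv_chainInit]
    split_ifs
    exacts [min_le_min_right j (hmono hii'), min_le_right _ _, by omega, le_rfl]
  · rw [cv_chainInit, if_pos (by omega), hj, min_self]

lemma cv_chainSnoc_of_lt (hjk : j ≤ k) {i : ℕ} (hi : i < p) :
    cv (chainSnoc k g') i = cv g' i := by
  rw [cv_chainSnoc, if_pos hi, min_eq_left ((cv_le g' i).trans hjk)]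

lemma chainSnoc_mem (hp : 1 ≤ p) (hg' : g' ∈ chains p j) :
    chainSnoc k g' ∈ chains (p + 1) k := by
  have hmono := ((mem_chains_iff_cv hp).mp hg').1
  refine (mem_chains_iff_cv (by omega)).mpr ⟨fun i i' hii' => ?_, ?_⟩
  · simp only [cv_chainSnoc]
    split_ifs
    exacts [min_le_min_right k (hmono hii'), min_le_right _ _, by omega, le_rfl]
  · rw [cv_chainSnoc, if_neg (by omega)]

lemma chainSnoc_chainInit (hp : 1 ≤ p) (hg : g ∈ chains (p + 1) k) (hj : cv g (p - 1) = j) :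
    chainSnoc k (chainInit j g) = g := by
  refine chain_ext fun i hi => ?_
  by_cases hip : i < p
  · rw [cv_chainSnoc_of_lt (hj ▸ cv_le g _) hip, cv_chainInit_of_lt hp hg hj hip]
  · rw [cv_chainSnoc, if_neg hip, show i = p by omega]
    exact (cv_pred_eq (by omega) hg).symm

lemma chainInit_chainSnoc (hjk : j ≤ k) : chainInit j (chainSnoc k g') = g' :=
  chain_ext fun i hi => by
    rw [cv_chainInit, if_pos hi, cv_chainSnoc_of_lt hjk hi, min_eq_left (cv_le g' i)]

end Chains

theorem chainSum_succ {p : ℕ} (hp : 1 ≤ p) (k : ℕ) (C : ℕ → F) :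
    chainSum (p + 1) k C =
      ∑ j ∈ range (k + 1), qq ^ (j ^ 2 + j) * qbinom k j * chainSum p j C := by
  rw [chainSum, ← sum_fiberwise_of_maps_to (g := fun g => cv g (p - 1))
    (fun g _ => mem_range.mpr (Nat.lt_succ_of_le (cv_le g _)))]
  refine sum_congr rfl fun j hj => ?_
  have hjk : j ≤ k := Nat.lt_succ_iff.mp (mem_range.mp hj)
  rw [chainSum, mul_sum]
  refine sum_nbij' (chainInit j) (chainSnoc k) (fun g hg => ?_) (fun g' hg' => ?_)
    (fun g hg => ?_) (fun g' _ => chainInit_chainSnoc hjk) (fun g hg => ?_)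
  · rw [mem_filter] at hg
    exact chainInit_mem hp hg.1 hg.2
  · exact mem_filter.mpr ⟨chainSnoc_mem hp hg',
      (cv_chainSnoc_of_lt hjk (by omega)).trans (cv_pred_eq hp hg')⟩
  · rw [mem_filter] at hg
    exact chainSnoc_chainInit hp hg.1 hg.2
  · rw [mem_filter] at hg
    have hinit : ∀ i < p, cv (chainInit j g) i = cv g i :=
      fun i hi => cv_chainInit_of_lt hp hg.1 hg.2 hi
    have hk : cv g p = k := cv_pred_eq (p := p + 1) (by omega) hg.1
    rw [show p + 1 - 1 = p - 1 + 1 by omega, chainWeight_succ, show p - 1 + 1 = p by omega, hg.2,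
      hk, chainWeight_congr fun i hi => (hinit i (by omega)).symm, hinit 0 hp]
    ring

lemma chainSum_one (k : ℕ) (C : ℕ → F) : chainSum 1 k C = C k := by
  have hconst : cv (fun _ : Fin 1 => Fin.last k) = fun _ => k := by
    funext i
    unfold cv
    split_ifs <;> rfl
  have hchains : chains 1 k = {fun _ => Fin.last k} := by
    ext g
    rw [mem_singleton, mem_chains_iff_cv le_rfl]
    constructor
    · rintro ⟨-, hlast⟩
      exact chain_ext fun i hi => by rw [hconst, show i = 0 by omega]; exact hlast
    · rintro rfl
      rw [hconst]
      exact ⟨monotone_const, rfl⟩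
  rw [chainSum, hchains, sum_singleton, hconst, chainWeight, Nat.sub_self, prod_range_zero, one_mul]

theorem chainSum_baileySum (γ : ℕ → F) {p : ℕ} (hp : 1 ≤ p) (k : ℕ) :
    chainSum p k (baileySum γ) = baileySum (fun l => qq ^ ((l ^ 2 + l) * (p - 1)) * γ l) k := by
  induction p, hp using Nat.le_induction generalizing k with
  | base => simp only [chainSum_one, Nat.sub_self, mul_zero, pow_zero, one_mul]
  | succ p hp ih =>
    rw [chainSum_succ hp, sum_congr rfl fun j _ => by rw [ih j],
      sum_qpow_mul_qbinom_mul_baileySum]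
    congr
    funext l
    rw [← mul_assoc, ← pow_add, Nat.add_sub_cancel,
      show (l ^ 2 + l) + (l ^ 2 + l) * (p - 1) = (l ^ 2 + l) * p by zify [hp]; ring]

/-- Iterated Bailey chain identity: if `B_n = (q;q)_n Σ_{l=0}^n α_l/((q;q)_{n-l}(q;q)_{n+l+1})`,
then for `p ≥ 1`,
`(q;q)_k Σ_{l=0}^k q^{(l²+l)(p-1)} α_l/((q;q)_{k-l}(q;q)_{k+l+1})` equals the multiple sum
over chains of length `p` ending at `k`. -/
theorem stmt14 (α B : ℕ → F)
    (hB : ∀ n, B n = poch qq n * ∑ l ∈ Finset.range (n + 1),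
      α l / (poch qq (n - l) * poch qq (n + l + 1)))
    (p k : ℕ) (hp : 1 ≤ p) :
    poch qq k * ∑ l ∈ Finset.range (k + 1),
        qq ^ ((l ^ 2 + l) * (p - 1)) * α l / (poch qq (k - l) * poch qq (k + l + 1)) =
      ∑ g ∈ chains p k,
        (∏ i ∈ Finset.range (p - 1),
          qq ^ (cv g i ^ 2 + cv g i) * qbinom (cv g (i + 1)) (cv g i)) * B (cv g 0) := by
  obtain rfl : B = baileySum α := funext hB
  exact (chainSum_baileySum α hp k).symm
end
end

section
/- For every integer k ≥ 0, Σ_{l=0}^{k} (−1)^l q^{l² + l + l(l−1)/2} (1 − q^{2l+1}) / ((q;q)_{k−l} (q;q)_{k+l+1}) = 1/(q;q)_k in F; that is, the pair α_l = (−1)^l q^{l²+l+l(l−1)/2}(1−q^{2l+1})/(1−q), β_k = 1/(q;q)_k is a Bailey pair relative to x = q. -/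
open Finset

noncomputable section

/-! The summands, multiplied by `(q;q)_k`, form a WZ pair `F(k, l)` with certificate `G(k, l)`:
`F(k+1, l) - F(k, l) = G(k, l+1) - G(k, l)` for `l ≤ k`, `F(k+1, k+1) = -G(k, k+1)` and
`G(k, 0) = 0`. Summing over `l` telescopes, so `∑_{l ≤ k} F(k, l)` does not depend on `k` and
equals `F(0, 0) = 1`. Once the Pochhammer symbols are peeled, each relation is an identity
between rational functions of `q`, `q^l` and `q^(k-l)`, which holds whenever `q` is not a root
of unity. -/

theorem sum_range_eq_of_wz {M : Type*} [AddCommGroup M] (f g : ℕ → ℕ → M)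
    (hstep : ∀ k l, l ≤ k → f (k + 1) l - f k l = g k (l + 1) - g k l)
    (htop : ∀ k, f (k + 1) (k + 1) = -g k (k + 1)) (hbot : ∀ k, g k 0 = 0) (k : ℕ) :
    ∑ l ∈ range (k + 1), f k l = f 0 0 := by
  induction k with
  | zero => simp
  | succ k ih =>
    have hsum :
        ∑ l ∈ range (k + 1), f (k + 1) l = ∑ l ∈ range (k + 1), f k l + g k (k + 1) := by
      rw [← sub_eq_iff_eq_add', ← sum_sub_distrib,
        sum_congr rfl fun l hl ↦ hstep k l (Nat.lt_succ_iff.1 (mem_range.1 hl)),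
        sum_range_sub (g k), hbot, sub_zero]
    rw [sum_range_succ, hsum, ih, htop, add_neg_cancel_right]

-- The exponent `l ^ 2 + l + l * (l - 1) / 2 = l * (3 * l + 1) / 2` is a generalized pentagonal
-- number.
lemma pentagonal_succ (l : ℕ) :
    (l + 1) ^ 2 + (l + 1) + (l + 1) * (l + 1 - 1) / 2 =
      l ^ 2 + l + l * (l - 1) / 2 + (3 * l + 2) := by
  have h : (l + 1) * (l + 1 - 1) = l * (l - 1) + 2 * l := by
    cases l <;> simp only [Nat.add_sub_cancel]; ring
  rw [h, Nat.add_mul_div_left _ _ two_pos]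
  ring

def qPoch {R : Type*} [CommRing R] (q : R) (n : ℕ) : R := ∏ j ∈ range n, (1 - q ^ (j + 1))

section
variable {R : Type*} [CommRing R] (q : R)

@[simp] lemma qPoch_zero : qPoch q 0 = 1 := prod_range_zero _

lemma qPoch_succ (n : ℕ) : qPoch q (n + 1) = qPoch q n * (1 - q ^ (n + 1)) :=
  prod_range_succ _ _

end

section
variable {K : Type*} [Field K] {q : K}

lemma one_sub_pow_ne_zero (hq : ∀ n ≠ 0, q ^ n ≠ 1) {n : ℕ} (hn : n ≠ 0) :
    1 - q ^ n ≠ 0 :=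
  sub_ne_zero.2 (hq n hn).symm

lemma qPoch_ne_zero (hq : ∀ n ≠ 0, q ^ n ≠ 1) (n : ℕ) : qPoch q n ≠ 0 :=
  prod_ne_zero_iff.2 fun j _ ↦ one_sub_pow_ne_zero hq j.succ_ne_zero

variable (q) in
def wzF (k l : ℕ) : K :=
  (-1) ^ l * q ^ (l ^ 2 + l + l * (l - 1) / 2) * (1 - q ^ (2 * l + 1)) * qPoch q k /
    (qPoch q (k - l) * qPoch q (k + l + 1))

variable (q) in
def wzG (k l : ℕ) : K :=
  (-1) ^ (l + 1) * q ^ (k + 1 - l + (l ^ 2 + l + l * (l - 1) / 2)) * (1 - q ^ l) * qPoch q k /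
    (qPoch q (k + 1 - l) * qPoch q (k + l + 1))

lemma wzF_succ_sub (hq : ∀ n ≠ 0, q ^ n ≠ 1) {k l : ℕ} (hl : l ≤ k) :
    wzF q (k + 1) l - wzF q k l = wzG q k (l + 1) - wzG q k l := by
  obtain ⟨m, rfl⟩ := Nat.exists_eq_add_of_le hl
  simp only [wzF, wzG]
  rw [show l + m + 1 - l = m + 1 by omega, show l + m - l = m by omega,
    show l + m + 1 - (l + 1) = m by omega, show l + m + 1 + l + 1 = l + m + l + 1 + 1 by omega,
    show l + m + (l + 1) + 1 = l + m + l + 1 + 1 by omega, pentagonal_succ,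
    qPoch_succ q m, qPoch_succ q (l + m), qPoch_succ q (l + m + l + 1)]
  have := one_sub_pow_ne_zero hq (Nat.add_one_ne_zero m)
  have := one_sub_pow_ne_zero hq (Nat.add_one_ne_zero (l + m + l + 1))
  have := qPoch_ne_zero hq m
  have := qPoch_ne_zero hq (l + m + l + 1)
  field_simp
  ring

lemma wzF_succ_self (hq : ∀ n ≠ 0, q ^ n ≠ 1) (k : ℕ) :
    wzF q (k + 1) (k + 1) = -wzG q k (k + 1) := by
  simp only [wzF, wzG]
  rw [Nat.sub_self, show k + 1 + (k + 1) + 1 = k + (k + 1) + 1 + 1 by omega,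
    qPoch_succ q (k + (k + 1) + 1), qPoch_succ q k]
  have := one_sub_pow_ne_zero hq (Nat.add_one_ne_zero (k + (k + 1) + 1))
  have := qPoch_ne_zero hq (k + (k + 1) + 1)
  field_simp
  ring

@[simp] lemma wzG_zero (k : ℕ) : wzG q k 0 = 0 := by simp [wzG]

lemma wzF_zero_zero (hq : ∀ n ≠ 0, q ^ n ≠ 1) : wzF q 0 0 = 1 := by
  have := one_sub_pow_ne_zero hq one_ne_zero
  simp_all [wzF, qPoch_succ]

theorem sum_range_wzF (hq : ∀ n ≠ 0, q ^ n ≠ 1) (k : ℕ) :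
    ∑ l ∈ range (k + 1), wzF q k l = 1 := by
  rw [sum_range_eq_of_wz (wzF q) (wzG q) (fun _ _ ↦ wzF_succ_sub hq) (wzF_succ_self hq)
    wzG_zero k, wzF_zero_zero hq]

theorem sum_range_baileyPair (hq : ∀ n ≠ 0, q ^ n ≠ 1) (k : ℕ) :
    ∑ l ∈ range (k + 1),
        (-1) ^ l * q ^ (l ^ 2 + l + l * (l - 1) / 2) * (1 - q ^ (2 * l + 1)) /
          (qPoch q (k - l) * qPoch q (k + l + 1)) =
      1 / qPoch q k := by
  have hk := qPoch_ne_zero hq k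
  calc _ = (∑ l ∈ range (k + 1), wzF q k l) / qPoch q k := by
        rw [sum_div]
        exact sum_congr rfl fun l _ ↦ by rw [wzF, div_right_comm, mul_div_cancel_right₀ _ hk]
    _ = 1 / qPoch q k := by rw [sum_range_wzF hq k]

end

lemma qq_pow_ne_one_s15 {n : ℕ} (hn : n ≠ 0) : qq ^ n ≠ 1 := by
  intro h
  have hX : (Polynomial.X ^ (2 * n) : Polynomial ℚ) = 1 := by
    apply RatFunc.algebraMap_injective ℚ
    rw [map_pow, RatFunc.algebraMap_X, map_one, pow_mul, ← h, qq, qv]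
  have := congrArg Polynomial.natDegree hX
  simp only [Polynomial.natDegree_X_pow, Polynomial.natDegree_one] at this
  omega

lemma poch_qq (n : ℕ) : poch qq n = qPoch qq n :=
  prod_congr rfl fun j _ ↦ by ring

/-- The Bailey pair `α_l = (-1)^l q^{l²+l+l(l-1)/2}(1-q^{2l+1})/(1-q)`, `β_k = 1/(q;q)_k`
relative to `x = q`. -/
theorem stmt15 (k : ℕ) :
    ∑ l ∈ Finset.range (k + 1),
        (-1) ^ l * qq ^ (l ^ 2 + l + l * (l - 1) / 2) * (1 - qq ^ (2 * l + 1)) /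
          (poch qq (k - l) * poch qq (k + l + 1)) =
      1 / poch qq k := by
  simp only [poch_qq]
  exact sum_range_baileyPair (fun _ ↦ qq_pow_ne_one_s15) k
end
end

section
/- For every integer k ≥ 0, Σ_{l=0}^{k} q^{l²} (1 − q^{2l+1}) / ((q;q)_{k−l} (q;q)_{k+l+1}) = 1/(q;q)_k² in F; that is, the pair α_l = q^{l²}(1−q^{2l+1})/(1−q), β_k = 1/(q;q)_k² is a Bailey pair relative to x = q. -/
open Finset

noncomputable section

/-!
Since `1 - q^{2l+1} = (1 - q^{k+l+1}) - q^{2l+1} (1 - q^{k-l})`, the `l`-th summand equals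
`T l - T (l + 1)` with `T l = q^{l²} / ((q;q)_{k-l} (q;q)_{k+l})`, while the last summand is
`T k` itself. The sum therefore telescopes to `T 0 = 1/(q;q)_k²`.
-/

section QFactorial

variable {K : Type*} [Field K]

/-- `(q;q)_n`. -/
def qFactorial (q : K) (n : ℕ) : K := ∏ j ∈ range n, (1 - q ^ (j + 1))

@[simp] lemma qFactorial_zero (q : K) : qFactorial q 0 = 1 := prod_range_zero _

lemma qFactorial_succ (q : K) (n : ℕ) :
    qFactorial q (n + 1) = qFactorial q n * (1 - q ^ (n + 1)) :=
  prod_range_succ _ n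

variable {q : K}

lemma qFactorial_ne_zero (hq : ∀ n, q ^ (n + 1) ≠ 1) (n : ℕ) : qFactorial q n ≠ 0 :=
  prod_ne_zero_iff.mpr fun j _ => sub_ne_zero.mpr (hq j).symm

-- The step `summand l = T l - T (l + 1)`, with `k = n + l + 1`.
lemma qpow_sq_mul_div_qFactorial_eq_sub (hq : ∀ n, q ^ (n + 1) ≠ 1) (n l : ℕ) :
    q ^ l ^ 2 * (1 - q ^ (2 * l + 1)) / (qFactorial q (n + 1) * qFactorial q (n + 2 * l + 2)) =
      q ^ l ^ 2 / (qFactorial q (n + 1) * qFactorial q (n + 2 * l + 1)) -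
        q ^ (l + 1) ^ 2 / (qFactorial q n * qFactorial q (n + 2 * l + 2)) := by
  have h1 := sub_ne_zero.mpr (hq n).symm
  have h2 := sub_ne_zero.mpr (hq (n + 2 * l + 1)).symm
  have hn := qFactorial_ne_zero hq n
  have hm := qFactorial_ne_zero hq (n + 2 * l + 1)
  rw [qFactorial_succ q n, qFactorial_succ q (n + 2 * l + 1)]
  field_simp
  ring

theorem sum_range_qpow_sq_div_qFactorial (hq : ∀ n, q ^ (n + 1) ≠ 1) (k : ℕ) :
    ∑ l ∈ range (k + 1),
        q ^ l ^ 2 * (1 - q ^ (2 * l + 1)) / (qFactorial q (k - l) * qFactorial q (k + l + 1)) =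
      1 / qFactorial q k ^ 2 := by
  set T : ℕ → K := fun l => q ^ l ^ 2 / (qFactorial q (k - l) * qFactorial q (k + l))
  have hstep : ∀ l ∈ range k,
      q ^ l ^ 2 * (1 - q ^ (2 * l + 1)) / (qFactorial q (k - l) * qFactorial q (k + l + 1)) =
        T l - T (l + 1) := by
    intro l hl
    obtain ⟨n, rfl⟩ := Nat.exists_eq_add_of_lt (mem_range.mp hl)
    simp only [T]
    rw [show l + n + 1 - l = n + 1 by omega, show l + n + 1 - (l + 1) = n by omega,
      show l + n + 1 + l + 1 = n + 2 * l + 2 by omega, show l + n + 1 + l = n + 2 * l + 1 by omega,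
      show l + n + 1 + (l + 1) = n + 2 * l + 2 by omega]
    exact qpow_sq_mul_div_qFactorial_eq_sub hq n l
  have hlast : q ^ k ^ 2 * (1 - q ^ (2 * k + 1)) /
      (qFactorial q (k - k) * qFactorial q (k + k + 1)) = T k := by
    simp only [T, Nat.sub_self, qFactorial_zero, one_mul, ← two_mul, qFactorial_succ]
    have := qFactorial_ne_zero hq (2 * k)
    have := sub_ne_zero.mpr (hq (2 * k)).symm
    field_simp
  rw [sum_range_succ, sum_congr rfl hstep, sum_range_sub', hlast, sub_add_cancel]
  simp [T, sq]

end QFactorial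

lemma qq_pow_succ_ne_one (n : ℕ) : qq ^ (n + 1) ≠ 1 := by
  intro h
  rw [qq, qv, ← pow_mul] at h
  have hP : (Polynomial.X : Polynomial ℚ) ^ (2 * (n + 1)) = 1 :=
    RatFunc.algebraMap_injective ℚ (by simpa [RatFunc.algebraMap_X] using h)
  simpa using congrArg Polynomial.natDegree hP

lemma poch_qq_eq_qFactorial (n : ℕ) : poch qq n = qFactorial qq n := by
  simp only [poch, qFactorial, pow_succ']

/-- The Bailey pair `α_l = q^{l²}(1-q^{2l+1})/(1-q)`, `β_k = 1/(q;q)_k²` relative to `x = q`. -/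
theorem stmt16 (k : ℕ) :
    ∑ l ∈ Finset.range (k + 1),
        qq ^ (l ^ 2) * (1 - qq ^ (2 * l + 1)) / (poch qq (k - l) * poch qq (k + l + 1)) =
      1 / poch qq k ^ 2 := by
  simp only [poch_qq_eq_qFactorial]
  exact sum_range_qpow_sq_div_qFactorial qq_pow_succ_ne_one k
end
end
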